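/- If π ∈ S_n has pinnacle set P = {p_1 < p_2 < ⋯ < p_ℓ} (with ℓ ≥ 1) and vale set V, then N_{PV}(p_ℓ) = 2, where p_ℓ is the largest pinnacle. -/

import Mathlib

/-- The extended one-line word of `w`, read 1-indexed, with the boundary
convention `π₀ = π_{n+1} = ∞`. -/
def ext (w : List ℕ) (i : ℕ) : ℕ∞ :=
  if 1 ≤ i ∧ i ≤ w.length then (w.getD (i - 1) 0 : ℕ∞) else ⊤

/-- The pinnacle set of the word `w`: values `π_i` with `π_{i-1} < π_i > π_{i+1}`. -/
def pinnSet (w : List ℕ) : Finset ℕ :=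
  ((Finset.Icc 1 w.length).filter fun i =>
      ext w (i - 1) < ext w i ∧ ext w (i + 1) < ext w i).image fun i => w.getD (i - 1) 0

/-- The vale set of the word `w`: values `π_i` with `π_{i-1} > π_i < π_{i+1}`. -/
def valeSet (w : List ℕ) : Finset ℕ :=
  ((Finset.Icc 1 w.length).filter fun i =>
      ext w i < ext w (i - 1) ∧ ext w i < ext w (i + 1)).image fun i => w.getD (i - 1) 0

/-- `w` is the one-line notation of a permutation of `[n] = {1, …, n}`. -/
def IsPermOf (n : ℕ) (w : List ℕ) : Prop := w.Perm (List.range' 1 n)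

/-- `w₁` in the `x`-factorization `w = w₁ w₂ x w₄ w₅`. -/
def fsW1 (x : ℕ) (w : List ℕ) : List ℕ :=
  ((w.take (w.idxOf x)).reverse.dropWhile fun a => decide (a < x)).reverse

/-- `w₂` in the `x`-factorization: the longest contiguous subword immediately to the
left of `x` all of whose letters are smaller than `x`. -/
def fsW2 (x : ℕ) (w : List ℕ) : List ℕ :=
  ((w.take (w.idxOf x)).reverse.takeWhile fun a => decide (a < x)).reverse

/-- `w₄` in the `x`-factorization: the longest contiguous subword immediately to the
right of `x` all of whose letters are smaller than `x`. -/
def fsW4 (x : ℕ) (w : List ℕ) : List ℕ :=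
  (w.drop (w.idxOf x + 1)).takeWhile fun a => decide (a < x)

/-- `w₅` in the `x`-factorization `w = w₁ w₂ x w₄ w₅`. -/
def fsW5 (x : ℕ) (w : List ℕ) : List ℕ :=
  (w.drop (w.idxOf x + 1)).dropWhile fun a => decide (a < x)

/-- The dual Foata–Strehl map `φ_x : w₁ w₂ x w₄ w₅ ↦ w₁ w₄ x w₂ w₅`. -/
def dualFS (x : ℕ) (w : List ℕ) : List ℕ :=
  if x ∈ w then fsW1 x w ++ fsW4 x w ++ [x] ++ fsW2 x w ++ fsW5 x w else w

/-- The dual Foata–Strehl map `φ_S` for a set `S`, i.e. the composition of the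
(commuting) maps `φ_x` over `x ∈ S`. -/
noncomputable def dualFSFinset (S : Finset ℕ) (w : List ℕ) : List ℕ :=
  S.toList.foldr dualFS w

/-- The largest letter of a word, with `wmax [] = 0`. -/
def wmax (w : List ℕ) : ℕ := w.foldr max 0

/-- The subword of `w` consisting of the letters lying in `A`. -/
def restrictTo (w : List ℕ) (A : Finset ℕ) : List ℕ :=
  w.filter fun a => decide (a ∈ A)

/-- `N_{PV}(k) = |V_k| - |P_k|` (natural subtraction). -/
def nPV (P V : Finset ℕ) (k : ℕ) : ℕ :=
  (V.filter fun v => v < k).card - (P.filter fun p => p < k).card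

/-- `N_{PV}(k) = |V_k| - |P_k|` as an integer. -/
def nPVZ (P V : Finset ℕ) (k : ℕ) : ℤ :=
  ((V.filter fun v => v < k).card : ℤ) - ((P.filter fun p => p < k).card : ℤ)

/-- `(P, V)` is admissible: some permutation of `[n]` has pinnacle set `P` and
vale set `V`. -/
def AdmissiblePair (n : ℕ) (P V : Finset ℕ) : Prop :=
  ∃ w : List ℕ, IsPermOf n w ∧ pinnSet w = P ∧ valeSet w = V

open Classical in
/-- `𝒱(P)`: the collection of all vale sets `V` for which `(P, V)` is admissible. -/
noncomputable def valeSetsOf (n : ℕ) (P : Finset ℕ) : Finset (Finset ℕ) :=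
  ((Finset.Icc 1 n).powerset).filter fun V => AdmissiblePair n P V

/-- `w` is FS-minimal: it has no double descents (with the `∞` boundary convention),
and for each pinnacle `p`, the `p`-factorization of the restriction of `w` to its
pinnacles and vales satisfies `max w₂ < max w₄`. -/
def FSMinimal (w : List ℕ) : Prop :=
  (∀ i ∈ Finset.Icc 1 w.length,
      ¬(ext w i < ext w (i - 1) ∧ ext w (i + 1) < ext w i)) ∧
  ∀ p ∈ pinnSet w,
    wmax (fsW2 p (restrictTo w (pinnSet w ∪ valeSet w))) <
      wmax (fsW4 p (restrictTo w (pinnSet w ∪ valeSet w)))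

/-- A `PV`-arrangement: a word listing each element of `P ∪ V` exactly once,
with pinnacle set `P` and vale set `V`. -/
def IsPVArrangement (P V : Finset ℕ) (α : List ℕ) : Prop :=
  α.Nodup ∧ α.toFinset = P ∪ V ∧ pinnSet α = P ∧ valeSet α = V

/-- A word is canonical (for pinnacle set `P`) if for each `p ∈ P` its
`p`-factorization satisfies `max w₂ < max w₄`. -/
def IsCanonical (P : Finset ℕ) (α : List ℕ) : Prop :=
  ∀ p ∈ P, wmax (fsW2 p α) < wmax (fsW4 p α)

/-- The number of descents of `w`: indices `j ∈ [n-1]` with `π_j > π_{j+1}`. -/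
def descentCount (w : List ℕ) : ℕ :=
  ((Finset.Icc 1 (w.length - 1)).filter fun j => w.getD j 0 < w.getD (j - 1) 0).card

/-- The original Foata–Strehl map `φ'_x`, defined like `φ_x` but with the words
`w₂, w₄` consisting of letters GREATER than `x`. -/
def origFS (x : ℕ) (w : List ℕ) : List ℕ :=
  if x ∈ w then
    ((w.take (w.idxOf x)).reverse.dropWhile fun a => decide (x < a)).reverse
      ++ ((w.drop (w.idxOf x + 1)).takeWhile fun a => decide (x < a)) ++ [x]
      ++ ((w.take (w.idxOf x)).reverse.takeWhile fun a => decide (x < a)).reverse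
      ++ ((w.drop (w.idxOf x + 1)).dropWhile fun a => decide (x < a))
  else w

/-- `C(l)`: weak compositions `(t₁, …, t_l)` of `l` with `t₁ + ⋯ + t_k ≥ k` for all `k`. -/
def weakComps (l : ℕ) : Finset (Fin l → ℕ) :=
  (Fintype.piFinset fun _ : Fin l => Finset.range (l + 1)).filter fun t =>
    (∑ i, t i) = l ∧ ∀ k : Fin l, (k : ℕ) + 1 ≤ ∑ i ∈ Finset.univ.filter (fun j => j ≤ k), t i

/-- `g_{i+1} = |G_{i+1}|`, the size of the `(i+1)`-st gap set
`G_{i+1} = {j ∈ [n] \ P : p_i < j < p_{i+1}}` (0-indexed `i`, with `p₀ = 1`). -/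
def gapCard (n : ℕ) (P : Finset ℕ) (i : ℕ) : ℕ :=
  (((Finset.Icc 1 n) \ P).filter fun j =>
      (if i = 0 then 1 else (P.sort (· ≤ ·)).getD (i - 1) 0) < j ∧
        j < (P.sort (· ≤ ·)).getD i 0).card


/-! In the extended word `∞ π₁ ⋯ πₙ ∞` (of distinct letters, `n ≥ 1`) vales and pinnacles
alternate, starting and ending with a vale, so `|V| = |P| + 1`. Moreover every vale lies below
some pinnacle: the largest letter between a vale and any pinnacle is not the vale (whose
neighbours exceed it), hence it is either that pinnacle or a local maximum strictly inside,
i.e. again a pinnacle. So all of `V` lies below `p_ℓ` while only `p_ℓ` is missing from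
`P_{p_ℓ}`, giving `N_{PV}(p_ℓ) = (|P| + 1) - (|P| - 1) = 2`. -/

section LocalExtrema

variable {α : Type*} [LinearOrder α]

def peakIdx (a : ℕ → α) (n : ℕ) : Finset ℕ :=
  (Finset.Icc 1 n).filter fun i => a (i - 1) < a i ∧ a (i + 1) < a i

def valleyIdx (a : ℕ → α) (n : ℕ) : Finset ℕ :=
  (Finset.Icc 1 n).filter fun i => a i < a (i - 1) ∧ a i < a (i + 1)

lemma peakIdx_subset_Icc (a : ℕ → α) (n : ℕ) : peakIdx a n ⊆ Finset.Icc 1 n :=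
  Finset.filter_subset _ _

lemma valleyIdx_subset_Icc (a : ℕ → α) (n : ℕ) : valleyIdx a n ⊆ Finset.Icc 1 n :=
  Finset.filter_subset _ _

lemma natCast_card_filter_Icc_one (p : ℕ → Prop) [DecidablePred p] (n : ℕ) :
    (((Finset.Icc 1 n).filter p).card : ℤ) =
      ∑ i ∈ Finset.range n, if p (i + 1) then 1 else 0 := by
  rw [Finset.natCast_card_filter, Finset.range_eq_Ico, Finset.sum_Ico_add' (f := fun i =>
    if p i then (1 : ℤ) else 0), Finset.Ico_add_one_right_eq_Icc]

theorem card_valleyIdx_eq_card_peakIdx_add_one {a : ℕ → α} {n : ℕ}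
    (hadj : ∀ i ≤ n, a i ≠ a (i + 1)) (hfirst : a 1 < a 0) (hlast : a n < a (n + 1)) :
    (valleyIdx a n).card = (peakIdx a n).card + 1 := by
  let ascent : ℕ → ℤ := fun i => if a i < a (i + 1) then 1 else 0
  have step : ∀ i ∈ Finset.range n,
      ((if a (i + 1) < a i ∧ a (i + 1) < a (i + 1 + 1) then 1 else 0) -
        (if a i < a (i + 1) ∧ a (i + 1 + 1) < a (i + 1) then 1 else 0) : ℤ) =
        ascent (i + 1) - ascent i := by
    intro i hi
    have hi := Finset.mem_range.1 hi
    rcases (hadj i (by omega)).lt_or_gt with h | h <;>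
      rcases (hadj (i + 1) (by omega)).lt_or_gt with h' | h' <;>
      simp [ascent, h, h', h.not_gt, h'.not_gt]
  have telescope := Finset.sum_congr rfl step
  rw [Finset.sum_sub_distrib, Finset.sum_range_sub ascent n] at telescope
  have hvalley : ((valleyIdx a n).card : ℤ) = ∑ i ∈ Finset.range n,
      if a (i + 1) < a i ∧ a (i + 1) < a (i + 1 + 1) then 1 else 0 :=
    natCast_card_filter_Icc_one _ n
  have hpeak : ((peakIdx a n).card : ℤ) = ∑ i ∈ Finset.range n,
      if a i < a (i + 1) ∧ a (i + 1 + 1) < a (i + 1) then 1 else 0 :=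
    natCast_card_filter_Icc_one _ n
  simp only [ascent, hlast, hfirst.not_gt, if_true, if_false] at telescope
  omega

theorem exists_mem_peakIdx_gt {a : ℕ → α} {n i j : ℕ} (hinj : Set.InjOn a (Set.Icc 1 n))
    (hi : i ∈ valleyIdx a n) (hj : j ∈ peakIdx a n) : ∃ m ∈ peakIdx a n, a i < a m := by
  simp only [valleyIdx, peakIdx, Finset.mem_filter, Finset.mem_Icc] at hi hj
  have hij : i ≠ j := by
    rintro rfl
    exact hi.2.2.not_gt hj.2.2
  obtain ⟨m, hm, hmax⟩ :=
    (Finset.Icc (min i j) (max i j)).exists_max_image a ⟨i, by simp⟩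
  simp only [Finset.mem_Icc] at hm hmax
  have hlt : ∀ k, min i j ≤ k → k ≤ max i j → k ≠ m → a k < a m := fun k hk1 hk2 hkm =>
    (hmax k ⟨hk1, hk2⟩).lt_of_ne fun h =>
      hkm (hinj ⟨by omega, by omega⟩ ⟨by omega, by omega⟩ h)
  have hmi : m ≠ i := by
    rintro rfl
    rcases hij.lt_or_gt with h | h
    · exact hi.2.2.not_ge (hmax (m + 1) ⟨by omega, by omega⟩)
    · exact hi.2.1.not_ge (hmax (m - 1) ⟨by omega, by omega⟩)
  refine ⟨m, ?_, hlt i (by omega) (by omega) hmi.symm⟩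
  by_cases hmj : m = j
  · subst hmj
    simpa only [peakIdx, Finset.mem_filter, Finset.mem_Icc] using hj
  · simp only [peakIdx, Finset.mem_filter, Finset.mem_Icc]
    exact ⟨⟨by omega, by omega⟩, hlt (m - 1) (by omega) (by omega) (by omega),
      hlt (m + 1) (by omega) (by omega) (by omega)⟩

end LocalExtrema

section Word

variable {w : List ℕ}

lemma ext_eq_getD {i : ℕ} (h1 : 1 ≤ i) (h2 : i ≤ w.length) :
    ext w i = (w.getD (i - 1) 0 : ℕ∞) := by
  simp [ext, h1, h2]

lemma ext_ne_top {i : ℕ} (h1 : 1 ≤ i) (h2 : i ≤ w.length) : ext w i ≠ ⊤ := by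
  simp [ext_eq_getD h1 h2]

lemma ext_zero (w : List ℕ) : ext w 0 = ⊤ := by
  simp [ext]

lemma ext_length_add_one (w : List ℕ) : ext w (w.length + 1) = ⊤ := by
  simp [ext]

lemma injOn_ext (hw : w.Nodup) : Set.InjOn (ext w) (Set.Icc 1 w.length) := by
  intro i ⟨hi1, hi2⟩ j ⟨hj1, hj2⟩ h
  rw [ext_eq_getD hi1 hi2, ext_eq_getD hj1 hj2, List.getD_eq_getElem _ _ (by omega),
    List.getD_eq_getElem _ _ (by omega), Nat.cast_inj, hw.getElem_inj_iff] at h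
  omega

lemma card_image_getD (hw : w.Nodup) {S : Finset ℕ} (hS : S ⊆ Finset.Icc 1 w.length) :
    (S.image fun i => w.getD (i - 1) 0).card = S.card := by
  refine Finset.card_image_of_injOn fun i hi j hj h => ?_
  have hi := Finset.mem_Icc.1 (hS hi)
  have hj := Finset.mem_Icc.1 (hS hj)
  apply injOn_ext hw hi hj
  simp only [ext_eq_getD hi.1 hi.2, ext_eq_getD hj.1 hj.2, h]

lemma pinnSet_eq_image :
    pinnSet w = (peakIdx (ext w) w.length).image fun i => w.getD (i - 1) 0 :=
  rfl

lemma valeSet_eq_image :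
    valeSet w = (valleyIdx (ext w) w.length).image fun i => w.getD (i - 1) 0 :=
  rfl

theorem card_valeSet_eq_card_pinnSet_add_one (hw : w.Nodup) (hne : w ≠ []) :
    (valeSet w).card = (pinnSet w).card + 1 := by
  have hlen := List.length_pos_iff.2 hne
  rw [valeSet_eq_image, pinnSet_eq_image, card_image_getD hw (valleyIdx_subset_Icc _ _),
    card_image_getD hw (peakIdx_subset_Icc _ _)]
  refine card_valleyIdx_eq_card_peakIdx_add_one (fun i hi => ?_) ?_ ?_
  · rcases Nat.eq_zero_or_pos i with rfl | hi0
    · rw [ext_zero]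
      exact (ext_ne_top le_rfl hlen).symm
    rcases hi.lt_or_eq with hi' | rfl
    · exact fun h => absurd (injOn_ext hw ⟨hi0, hi⟩ ⟨by omega, hi'⟩ h) (by omega)
    · rw [ext_length_add_one]
      exact ext_ne_top hlen le_rfl
  · rw [ext_zero]
    exact lt_top_iff_ne_top.2 (ext_ne_top le_rfl hlen)
  · rw [ext_length_add_one]
    exact lt_top_iff_ne_top.2 (ext_ne_top hlen le_rfl)

theorem exists_mem_pinnSet_gt (hw : w.Nodup) {v : ℕ} (hv : v ∈ valeSet w)
    (hP : (pinnSet w).Nonempty) : ∃ p ∈ pinnSet w, v < p := by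
  rw [valeSet_eq_image, Finset.mem_image] at hv
  obtain ⟨i, hi, rfl⟩ := hv
  obtain ⟨_, hp⟩ := hP
  rw [pinnSet_eq_image, Finset.mem_image] at hp
  obtain ⟨j, hj, -⟩ := hp
  obtain ⟨m, hm, hlt⟩ := exists_mem_peakIdx_gt (injOn_ext hw) hi hj
  have hi' := Finset.mem_Icc.1 (valleyIdx_subset_Icc _ _ hi)
  have hm' := Finset.mem_Icc.1 (peakIdx_subset_Icc _ _ hm)
  rw [ext_eq_getD hi'.1 hi'.2, ext_eq_getD hm'.1 hm'.2, Nat.cast_lt] at hlt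
  exact ⟨_, Finset.mem_image_of_mem _ hm, hlt⟩

end Word

theorem nPVZ_max'_eq_two {P V : Finset ℕ} (hne : P.Nonempty) (hcard : V.card = P.card + 1)
    (hV : ∀ v ∈ V, v < P.max' hne) : nPVZ P V (P.max' hne) = 2 := by
  have hVlt : V.filter (· < P.max' hne) = V := Finset.filter_true_of_mem hV
  have hPlt : P.filter (· < P.max' hne) = P.erase (P.max' hne) := by
    ext p
    simp only [Finset.mem_filter, Finset.mem_erase]
    exact ⟨fun ⟨hp, hlt⟩ => ⟨hlt.ne, hp⟩, fun ⟨hne', hp⟩ => ⟨hp, (P.le_max' p hp).lt_of_ne hne'⟩⟩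
  have hPcard := Finset.card_erase_add_one (P.max'_mem hne)
  simp only [nPVZ, hVlt, hPlt]
  omega

/-- Lemma 4.2(f): if `π ∈ S_n` has pinnacle set `P ≠ ∅` and vale
set `V`, then `N_PV(p_ℓ) = 2` for the largest pinnacle `p_ℓ`. -/
theorem nPV_max_pinnacle (n : ℕ) (π : List ℕ) (hπ : IsPermOf n π) (P V : Finset ℕ)
    (hP : pinnSet π = P) (hV : valeSet π = V) (hne : P.Nonempty) :
    nPVZ P V (P.max' hne) = 2 := by
  subst hP hV
  have hnodup : π.Nodup := hπ.nodup_iff.2 List.nodup_range'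
  have hπne : π ≠ [] := by
    rintro rfl
    simp [pinnSet] at hne
  refine nPVZ_max'_eq_two hne (card_valeSet_eq_card_pinnSet_add_one hnodup hπne) fun v hv => ?_
  obtain ⟨p, hp, hvp⟩ := exists_mem_pinnSet_gt hnodup hv hne
  exact hvp.trans_le ((pinnSet π).le_max' p hp)
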